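/- arXiv:2307.16046 — 5 statements merged into one kernel-verified Lean document; each statement's English description precedes it below -/
import Mathlib

section
/- For any finite set S of variable indices with 1 ∉ S, any integer d, and any nonnegative integer a, the identity x_1^a · e_d(S) = Σ_{k=1}^{a} (−1)^{k−1} x_1^{a−k} e_{d+k}(S ∪ {1}) + (−1)^a e_{d+a}(S) holds in ℤ[x_1, …, x_n]. -/
open MvPolynomial

/-- Elementary symmetric polynomial of degree `d` in variables `{x_i : i ∈ S}`. -/
noncomputable def esub (R : Type) [CommRing R] (S : Finset ℕ) (d : ℕ) : MvPolynomial ℕ R :=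
  ∑ T ∈ S.powersetCard d, ∏ i ∈ T, X i

/-- Elementary symmetric polynomial with integer degree index: `0` for `d < 0`. -/
noncomputable def esubZ (R : Type) [CommRing R] (S : Finset ℕ) (d : ℤ) : MvPolynomial ℕ R :=
  if 0 ≤ d then esub R S d.toNat else 0

lemma esub_insert (S : Finset ℕ) (hS : 1 ∉ S) (d : ℕ) :
    esub ℤ (insert 1 S) (d+1) = esub ℤ S (d+1) + X 1 * esub ℤ S d := by
  unfold esub
  rw [Finset.powersetCard_succ_insert hS, Finset.sum_union, Finset.sum_image, Finset.mul_sum]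
  · congr 1
    apply Finset.sum_congr rfl
    intro T hT
    rw [Finset.mem_powersetCard] at hT
    rw [Finset.prod_insert (fun h => hS (hT.1 h))]
  · intro T hT U hU h
    rw [Finset.mem_coe, Finset.mem_powersetCard] at hT hU
    have hT1 : 1 ∉ T := fun h => hS (hT.1 h)
    have hU1 : 1 ∉ U := fun h => hS (hU.1 h)
    rw [← Finset.erase_insert hT1, ← Finset.erase_insert hU1, h]
  · rw [Finset.disjoint_left]
    intro T hT hT'
    rw [Finset.mem_powersetCard] at hT
    simp only [Finset.mem_image] at hT'
    obtain ⟨U, hU, rfl⟩ := hT'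
    exact hS (hT.1 (Finset.mem_insert_self 1 U))

lemma esub_zero (S : Finset ℕ) : esub ℤ S 0 = 1 := by
  simp [esub]

lemma key (S : Finset ℕ) (hS : 1 ∉ S) (d : ℤ) :
    X 1 * esubZ ℤ S d = esubZ ℤ (insert 1 S) (d+1) - esubZ ℤ S (d+1) := by
  unfold esubZ
  rcases lt_trichotomy d (-1) with h | h | h
  · rw [if_neg (by omega), if_neg (by omega), if_neg (by omega)]; ring
  · subst h
    rw [if_neg (by omega), if_pos (by omega), if_pos (by omega)]
    norm_num [esub_zero]
  · have h0 : (0:ℤ) ≤ d := by omega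
    rw [if_pos h0, if_pos (by omega), if_pos (by omega)]
    have : (d+1).toNat = d.toNat + 1 := by omega
    rw [this, esub_insert S hS]
    ring

theorem stmt1 (S : Finset ℕ) (hS : 1 ∉ S) (d : ℤ) (a : ℕ) :
    (X 1 : MvPolynomial ℕ ℤ) ^ a * esubZ ℤ S d =
      (∑ k ∈ Finset.Icc 1 a,
        (-1 : MvPolynomial ℕ ℤ) ^ (k - 1) * X 1 ^ (a - k) * esubZ ℤ (insert 1 S) (d + k)) +
      (-1 : MvPolynomial ℕ ℤ) ^ a * esubZ ℤ S (d + a) := by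
  induction a with
  | zero => simp
  | succ a ih =>
    have step : (X 1 : MvPolynomial ℕ ℤ) ^ (a+1) * esubZ ℤ S d
        = X 1 * (X 1 ^ a * esubZ ℤ S d) := by ring
    rw [step, ih, mul_add, Finset.mul_sum]
    have hIcc : Finset.Icc 1 (a+1) = insert (a+1) (Finset.Icc 1 a) := by
      ext x; simp [Finset.mem_Icc]; omega
    rw [hIcc, Finset.sum_insert (by simp)]
    have hsum : ∀ k ∈ Finset.Icc 1 a,
        X 1 * ((-1 : MvPolynomial ℕ ℤ) ^ (k - 1) * X 1 ^ (a - k) * esubZ ℤ (insert 1 S) (d + k))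
        = (-1 : MvPolynomial ℕ ℤ) ^ (k - 1) * X 1 ^ (a + 1 - k) * esubZ ℤ (insert 1 S) (d + k) := by
      intro k hk
      rw [Finset.mem_Icc] at hk
      have : a + 1 - k = (a - k) + 1 := by omega
      rw [this, pow_succ]; ring
    rw [Finset.sum_congr rfl hsum]
    have : X 1 * ((-1 : MvPolynomial ℕ ℤ) ^ a * esubZ ℤ S (d + a))
        = (-1 : MvPolynomial ℕ ℤ) ^ a * (X 1 * esubZ ℤ S (d + a)) := by ring
    rw [this, key S hS (d + a)]
    have h1 : d + a + 1 = d + (a+1 : ℕ) := by push_cast; ring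
    rw [h1]
    have h2 : (a + 1) - (a + 1) = 0 := by omega
    have h3 : (a + 1) - 1 = a := by omega
    rw [h2, h3, pow_zero, pow_succ]
    ring
end

section
/- Let λ be a partition, n ≥ 1, and j a row index such that λ^{(j)} is defined (the rightmost cell of row j of the Young diagram of λ' is the bottommost cell in its column). Then for 0 ≤ m ≤ n−1: p_m^{n−1}(λ^{(j)}) = p_{m+1}^n(λ) − 1 if n − m ≤ j, and p_m^{n−1}(λ^{(j)}) = p_{m+1}^n(λ) if n − m > j. -/
/-- `pfun c n m = p_m^n(λ)` where `c = λ'` (indexed from 1):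
the sum `λ'_{n-m+1} + λ'_{n-m+2} + ⋯`. -/
noncomputable def pfun (c : ℕ → ℕ) (n m : ℕ) : ℕ := ∑ᶠ i ∈ {i : ℕ | n - m + 1 ≤ i}, c i

/-- for a partition `λ` with conjugate `c = λ'` and `λ^{(j)}` defined
(encoded: `j = 0` or `c (j+1) < c j`; the conjugate of `λ^{(j)}` is `c` with the `j`-th
entry decreased by one), for `0 ≤ m ≤ n - 1`:
`p_m^{n-1}(λ^{(j)}) = p_{m+1}^n(λ) - 1` if `n - m ≤ j`, and
`p_m^{n-1}(λ^{(j)}) = p_{m+1}^n(λ)` if `n - m > j`. -/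
theorem stmt2 (c : ℕ → ℕ) (hanti : ∀ i, 1 ≤ i → c (i + 1) ≤ c i)
    (hfin : (Function.support c).Finite) (n : ℕ) (hn : 1 ≤ n) (j : ℕ)
    (hj : j = 0 ∨ c (j + 1) < c j) (m : ℕ) (hm : m ≤ n - 1) :
    (n - m ≤ j →
      pfun (fun i => if i = j then c i - 1 else c i) (n - 1) m + 1 = pfun c n (m + 1)) ∧
    (j < n - m →
      pfun (fun i => if i = j then c i - 1 else c i) (n - 1) m = pfun c n (m + 1)) := by
  set f : ℕ → ℕ := fun i => if i = j then c i - 1 else c i with hf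
  have hidx1 : n - 1 - m + 1 = n - m := by omega
  have hidx2 : n - (m + 1) + 1 = n - m := by omega
  have hS : {i : ℕ | n - 1 - m + 1 ≤ i} = {i : ℕ | n - m ≤ i} := by
    ext i; simp [hidx1]
  have hS' : {i : ℕ | n - (m + 1) + 1 ≤ i} = {i : ℕ | n - m ≤ i} := by
    ext i; simp [hidx2]
  have hsub : Function.support f ⊆ Function.support c := by
    intro i hi
    simp only [hf, Function.mem_support] at hi ⊢
    by_cases h : i = j
    · rw [if_pos h] at hi; omega
    · rwa [if_neg h] at hi
  have hfinf : (Function.support f).Finite := hfin.subset hsub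
  constructor
  · intro h
    have hj1 : 1 ≤ j := by omega
    have hcj : 1 ≤ c j := by
      rcases hj with rfl | hj
      · omega
      · omega
    have hjmem : j ∈ {i : ℕ | n - m ≤ i} := h
    have hsplit : ∀ g : ℕ → ℕ, (Function.support g).Finite →
        ∑ᶠ i ∈ {i : ℕ | n - m ≤ i}, g i
          = g j + ∑ᶠ i ∈ {i : ℕ | n - m ≤ i} \ {j}, g i := by
      intro g hg
      rw [← finsum_mem_singleton (a := j) (f := g),
        finsum_mem_add_sdiff' (f := g) (s := ({j} : Set ℕ))
          (by simpa using hjmem) (hg.inter_of_right _)]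
    unfold pfun
    rw [hS, hS', hsplit f hfinf, hsplit c hfin]
    have hrest : ∑ᶠ i ∈ {i : ℕ | n - m ≤ i} \ {j}, f i
        = ∑ᶠ i ∈ {i : ℕ | n - m ≤ i} \ {j}, c i := by
      apply finsum_mem_congr rfl
      intro x hx
      simp only [hf]
      rw [if_neg (by simpa using hx.2)]
    rw [hrest]
    have : f j = c j - 1 := by simp [hf]
    omega
  · intro h
    unfold pfun
    rw [hS, hS']
    apply finsum_mem_congr rfl
    intro x hx
    simp only [hf]
    rw [if_neg (by simp only [Set.mem_setOf_eq] at hx; omega)]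
end

section
/- Let λ be a partition, n a positive integer, j a row index with λ^{(j)} defined, and a := λ'_{j+1}. Suppose S ⊆ {2, …, n} with |S| < n − j and d > |S| − p_{|S|+1}^n(λ). Then d + a > |S| − p_{|S|}^n(λ); consequently e_{d+a}(S) lies in the ideal J_{n,λ} of ℤ[x_1,…,x_n] generated by all e_{d'}(S') with S' ⊆ [n] and d' > |S'| − p_{|S'|}^n(λ). -/
open MvPolynomial

/-- The ideal `J_{n,λ} ⊆ ℤ[x_1,…,x_n]` generated by all `e_d(S)` with `S ⊆ [n]` and
`d > |S| - p_{|S|}^n(λ)` (equivalently `|S| < d + p_{|S|}^n(λ)`). -/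
noncomputable def Jideal (c : ℕ → ℕ) (n : ℕ) : Ideal (MvPolynomial ℕ ℤ) :=
  Ideal.span {f | ∃ (S : Finset ℕ) (d : ℕ),
    S ⊆ Finset.Icc 1 n ∧ S.card < d + pfun c n S.card ∧ f = esub ℤ S d}

lemma c_antitone (c : ℕ → ℕ) (hanti : ∀ i, 1 ≤ i → c (i + 1) ≤ c i)
    {i k : ℕ} (hi : 1 ≤ i) (hik : i ≤ k) : c k ≤ c i := by
  induction k with
  | zero => omega
  | succ k ih =>
    rcases Nat.lt_or_ge i (k+1) with h | h
    · exact le_trans (hanti k (by omega)) (ih (by omega))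
    · have : i = k + 1 := by omega
      rw [this]

lemma pfun_succ (c : ℕ → ℕ) (hfin : (Function.support c).Finite)
    {n m : ℕ} (hm : m < n) : pfun c n (m + 1) = c (n - m) + pfun c n m := by
  unfold pfun
  have h1 : n - (m + 1) + 1 = n - m := by omega
  have h2 : {i : ℕ | n - (m+1) + 1 ≤ i} = insert (n - m) {i : ℕ | n - m + 1 ≤ i} := by
    ext i
    simp only [Set.mem_setOf_eq, Set.mem_insert_iff, h1]
    omega
  rw [h2, finsum_mem_insert' c (by simp) (hfin.inter_of_right _)]

/-- Here `c = λ'`, `λ^{(j)}` is defined (`j = 0` or `c (j+1) < c j`),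
`a = λ'_{j+1}`, `S ⊆ {2,…,n}` with `|S| < n - j`, and `d > |S| - p_{|S|+1}^n(λ)`.
Then `d + a > |S| - p_{|S|}^n(λ)` and `e_{d+a}(S) ∈ J_{n,λ}`. -/
theorem stmt3 (c : ℕ → ℕ) (hanti : ∀ i, 1 ≤ i → c (i + 1) ≤ c i)
    (hfin : (Function.support c).Finite) (n : ℕ) (hn : 1 ≤ n) (j : ℕ)
    (hj : j = 0 ∨ c (j + 1) < c j) (a : ℕ) (ha : a = c (j + 1))
    (S : Finset ℕ) (hS : S ⊆ Finset.Icc 2 n) (hcard : S.card + j < n)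
    (d : ℕ) (hd : S.card < d + pfun c n (S.card + 1)) :
    S.card < (d + a) + pfun c n S.card ∧ esub ℤ S (d + a) ∈ Jideal c n := by
  have hsplit := pfun_succ c hfin (show S.card < n by omega)
  have hle : c (n - S.card) ≤ a := by
    rw [ha]
    exact c_antitone c hanti (by omega) (by omega)
  have hmain : S.card < (d + a) + pfun c n S.card := by omega
  refine ⟨hmain, ?_⟩
  apply Ideal.subset_span
  exact ⟨S, d + a, fun x hx => Finset.mem_Icc.mpr (by
    have := Finset.mem_Icc.mp (hS hx); omega), hmain, rfl⟩
end

section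
/- Let λ be a partition, n ≥ 1, and j with λ^{(j)} defined, and set a := λ'_{j+1}. If S ⊆ {2,…,n} with |S| ≥ n − j and d > |S| − p_{|S|}^{n−1}(λ^{(j)}), then d > (|S|+1) − p_{|S|+1}^n(λ); consequently x_1^a · e_d(S ∪ {1}) lies in the ideal J_{n,λ} generated by all e_{d'}(S') with S' ⊆ [n], d' > |S'| − p_{|S'|}^n(λ). -/
open MvPolynomial

lemma pfun_eq_sum (c : ℕ → ℕ) (N : ℕ) (hN : ∀ i, c i ≠ 0 → i ≤ N) (n m : ℕ) :
    pfun c n m = ∑ i ∈ Finset.Icc (n - m + 1) N, c i := by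
  unfold pfun
  apply finsum_mem_eq_sum_of_inter_support_eq
  ext i
  simp only [Set.mem_inter_iff, Set.mem_setOf_eq, Function.mem_support, Finset.coe_Icc,
    Set.mem_Icc]
  constructor
  · rintro ⟨h1, h2⟩; exact ⟨⟨h1, hN i h2⟩, h2⟩
  · rintro ⟨⟨h1, _⟩, h2⟩; exact ⟨h1, h2⟩

/-- Here `c = λ'`, `λ^{(j)}` is defined (`j = 0` or `c (j+1) < c j`),
its conjugate is `c` decreased by one in the `j`-th entry, and `a = λ'_{j+1}`.
If `S ⊆ {2,…,n}` with `|S| ≥ n - j` and `d > |S| - p_{|S|}^{n-1}(λ^{(j)})`, then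
`d > (|S|+1) - p_{|S|+1}^n(λ)` and `x_1^a ⬝ e_d(S ∪ {1}) ∈ J_{n,λ}`. -/
theorem stmt4 (c : ℕ → ℕ) (hanti : ∀ i, 1 ≤ i → c (i + 1) ≤ c i)
    (hfin : (Function.support c).Finite) (n : ℕ) (hn : 1 ≤ n) (j : ℕ)
    (hj : j = 0 ∨ c (j + 1) < c j) (a : ℕ) (ha : a = c (j + 1))
    (S : Finset ℕ) (hS : S ⊆ Finset.Icc 2 n) (hcard : n ≤ S.card + j)
    (d : ℕ) (hd : S.card < d + pfun (fun i => if i = j then c i - 1 else c i) (n - 1) S.card) :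
    S.card + 1 < d + pfun c n (S.card + 1) ∧
      (X 1 : MvPolynomial ℕ ℤ) ^ a * esub ℤ (insert 1 S) d ∈ Jideal c n := by
  have hmle : S.card ≤ n - 1 := by
    calc S.card ≤ (Finset.Icc 2 n).card := Finset.card_le_card hS
    _ = n - 1 := by rw [Nat.card_Icc]; omega
  have hmn : S.card < n := by omega
  have hj1 : 1 ≤ j := by
    rcases hj with h | h
    · omega
    · by_contra hc
      interval_cases j
      · omega
  have hcj : c (j + 1) < c j := by
    rcases hj with h | h
    · omega
    · exact h
  -- bound on support
  obtain ⟨N, hNb⟩ := hfin.bddAbove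
  have hN : ∀ i, c i ≠ 0 → i ≤ N := fun i hi => hNb hi
  have hN' : ∀ i, (if i = j then c i - 1 else c i) ≠ 0 → i ≤ N := by
    intro i hi
    apply hN
    by_contra h0
    simp [h0] at hi
  have hjN : j ≤ N := hN j (by omega)
  have key : pfun (fun i => if i = j then c i - 1 else c i) (n - 1) S.card
      < pfun c n (S.card + 1) := by
    rw [pfun_eq_sum _ N hN', pfun_eq_sum _ N hN]
    have h1 : n - 1 - S.card + 1 = n - S.card := by omega
    have h2 : n - (S.card + 1) + 1 = n - S.card := by omega
    rw [h1, h2]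
    apply Finset.sum_lt_sum
    · intro i _
      split <;> omega
    · refine ⟨j, Finset.mem_Icc.mpr ⟨by omega, hjN⟩, ?_⟩
      rw [if_pos rfl]
      omega
  have hgoal1 : S.card + 1 < d + pfun c n (S.card + 1) := by omega
  refine ⟨hgoal1, ?_⟩
  apply Ideal.mul_mem_left
  apply Ideal.subset_span
  refine ⟨insert 1 S, d, ?_, ?_, rfl⟩
  · intro x hx
    rcases Finset.mem_insert.mp hx with h | h
    · subst h; exact Finset.mem_Icc.mpr ⟨le_refl 1, hn⟩
    · have := hS h
      rw [Finset.mem_Icc] at this ⊢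
      omega
  · have h1S : 1 ∉ S := by
      intro h
      have := hS h
      rw [Finset.mem_Icc] at this
      omega
    rw [Finset.card_insert_of_notMem h1S]
    exact hgoal1
end

section
/- For each d with 1 ≤ d ≤ n, the leading monomial of the complete homogeneous symmetric polynomial h_d(x_1,…,x_{n−d+1}) with respect to the graded reverse lexicographic order (with x_1 largest in ties broken by smaller leading exponent; as defined in the paper) is x_{n−d+1}^d, with coefficient 1. -/
open MvPolynomial

/-- Total degree of an exponent vector. -/
def degN (a : ℕ →₀ ℕ) : ℕ := a.sum fun _ v => v

/-- Graded reverse lexicographic order on exponent vectors (variables indexed by `ℕ`,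
with `x_1` the first variable): `a < b` iff `deg a < deg b`, or degrees agree and at the
first differing index the exponent of `a` is larger. -/
def grevlexN (a b : ℕ →₀ ℕ) : Prop :=
  degN a < degN b ∨ (degN a = degN b ∧ ∃ i, (∀ j, j < i → a j = b j) ∧ b i < a i)

/-- The complete homogeneous symmetric polynomial `h_d(x_1, …, x_m)`:
the sum of all monomials of degree `d` in the variables `x_1, …, x_m`. -/
noncomputable def hpoly (d m : ℕ) : MvPolynomial ℕ ℚ :=
  ∑ t ∈ Finset.sym (Finset.Icc 1 m) d, (Multiset.map X (t : Multiset ℕ)).prod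

lemma prod_map_X (s : Multiset ℕ) : (Multiset.map X s).prod = monomial s.toFinsupp (1 : ℚ) := by
  induction s using Multiset.induction_on with
  | empty => simp
  | cons a s ih =>
    rw [Multiset.map_cons, Multiset.prod_cons, ih, ← Multiset.singleton_add,
      Multiset.toFinsupp_add, Multiset.toFinsupp_singleton, X, monomial_mul, one_mul]

lemma degN_toFinsupp (s : Multiset ℕ) : degN s.toFinsupp = Multiset.card s := by
  rw [degN, ← Multiset.toFinsupp_sum_eq]; rfl

lemma degN_single (i d : ℕ) : degN (Finsupp.single i d) = d := by
  simp [degN, Finsupp.sum_single_index]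

lemma toFinsupp_replicate (d m : ℕ) :
    (Multiset.replicate d m).toFinsupp = Finsupp.single m d := by
  ext j
  rw [Multiset.toFinsupp_apply, Multiset.count_replicate]
  simp [Finsupp.single_apply, eq_comm]

lemma hpoly_eq (d m : ℕ) :
    hpoly d m = ∑ t ∈ Finset.sym (Finset.Icc 1 m) d,
      monomial (t : Multiset ℕ).toFinsupp (1 : ℚ) := by
  unfold hpoly; exact Finset.sum_congr rfl fun t _ => prod_map_X _

/-- for `1 ≤ d ≤ n`, the grevlex leading monomial of
`h_d(x_1,…,x_{n-d+1})` is `x_{n-d+1}^d`, with coefficient `1`. -/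
theorem stmt7 (n d : ℕ) (hd1 : 1 ≤ d) (hdn : d ≤ n) :
    coeff (Finsupp.single (n - d + 1) d) (hpoly d (n - d + 1)) = 1 ∧
    ∀ m ∈ (hpoly d (n - d + 1)).support,
      m ≠ Finsupp.single (n - d + 1) d → grevlexN m (Finsupp.single (n - d + 1) d) := by
  set M := n - d + 1 with hM
  have hM1 : 1 ≤ M := Nat.le_add_left 1 _
  set t0 : Sym ℕ d := ⟨Multiset.replicate d M, Multiset.card_replicate _ _⟩ with ht0def
  have ht0 : t0 ∈ Finset.sym (Finset.Icc 1 M) d := by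
    rw [Finset.mem_sym_iff]
    intro a ha
    have : a = M := Multiset.eq_of_mem_replicate ha
    subst this
    exact Finset.mem_Icc.2 ⟨hM1, le_rfl⟩
  constructor
  · rw [hpoly_eq]
    rw [coeff_sum]
    rw [Finset.sum_eq_single_of_mem t0 ht0]
    · rw [coeff_monomial, if_pos]
      exact toFinsupp_replicate d M
    · intro b _ hb
      rw [coeff_monomial, if_neg]
      intro h
      apply hb
      have : (b : Multiset ℕ) = Multiset.replicate d M := by
        apply Multiset.toFinsupp.injective
        rw [h, toFinsupp_replicate]
      exact Sym.coe_injective this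
  · intro a ha hne
    rw [hpoly_eq] at ha
    obtain ⟨t, htmem, hta⟩ := Finset.mem_biUnion.1 (MvPolynomial.support_sum ha)
    have hta : a = (t : Multiset ℕ).toFinsupp := by
      rw [support_monomial, if_neg one_ne_zero] at hta
      exact Finset.mem_singleton.1 hta
    have hdeg : degN a = d := by rw [hta, degN_toFinsupp]; exact t.2
    have hsupp : ∀ j, a j ≠ 0 → 1 ≤ j ∧ j ≤ M := by
      intro j hj
      rw [hta, Multiset.toFinsupp_apply] at hj
      have : j ∈ (t : Multiset ℕ) := Multiset.count_pos.1 (Nat.pos_of_ne_zero hj)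
      exact Finset.mem_Icc.1 ((Finset.mem_sym_iff.1 htmem) j this)
    right
    refine ⟨by rw [hdeg, degN_single], ?_⟩
    have hex : ∃ i, a i ≠ Finsupp.single M d i := by
      by_contra h
      push_neg at h
      exact hne (Finsupp.ext h)
    refine ⟨Nat.find hex, fun j hj => by simpa using Nat.find_min hex hj, ?_⟩
    set i := Nat.find hex with hi
    have hdiff : a i ≠ Finsupp.single M d i := Nat.find_spec hex
    by_cases him : i = M
    · exfalso
      have hzero : ∀ j, j ≠ M → a j = 0 := by
        intro j hjM
        rcases lt_or_ge j M with h | h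
        · have := Nat.find_min hex (by omega : j < i)
          push_neg at this
          rw [this, Finsupp.single_apply, if_neg (by omega)]
        · by_contra hz
          have := (hsupp j hz).2
          omega
      have : a = Finsupp.single M (a M) := by
        ext j
        by_cases hjM : j = M
        · subst hjM; simp
        · rw [hzero j hjM, Finsupp.single_apply, if_neg (Ne.symm hjM)]
      rw [this, degN_single] at hdeg
      apply hne
      rw [this, hdeg]
    · rw [Finsupp.single_apply, if_neg (Ne.symm him)] at hdiff ⊢
      omega
end
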